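/- Let K ≥ 2 and T ≥ K be integers, let loḡ(K) = 1/2 + Σ_{i=2}^{K} 1/i, and for 1 ≤ k ≤ K − 1 define n_k = ⌈ (T − K) / ( loḡ(K)·(K + 1 − k) ) ⌉. Then n₁ + n₂ + ⋯ + n_{K−2} + 2·n_{K−1} ≤ T. -/

import Mathlib

open Finset

/-- `loḡ(K) = 1/2 + Σ_{i=2}^{K} 1/i`. -/
noncomputable def logBar (K : ℕ) : ℝ := 1 / 2 + ∑ i ∈ Finset.Icc 2 K, (1 : ℝ) / i

/-- The phase lengths of the Successive Rejects framework:
`n_k = ⌈(T − K) / (loḡ(K)·(K + 1 − k))⌉` for `1 ≤ k ≤ K − 1`. -/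
noncomputable def srPulls (K T k : ℕ) : ℕ :=
  ⌈((T : ℝ) - K) / (logBar K * ((K : ℝ) + 1 - k))⌉₊

/-! Each `n_k` exceeds its real relaxation `x_k = (T − K) / (loḡ(K)·(K + 1 − k))` by less than
one, so the budget spent is below `x₁ + ⋯ + x_{K−2} + 2·x_{K−1} + K`. Reflecting `k ↦ K + 1 − k`,
the weights `1/(K + 1 − k)` with the last one doubled add up to `1/3 + ⋯ + 1/K + 1 = loḡ(K)`,
which is exactly the normalisation in `x_k`; the relaxed budget is therefore `T − K`. -/

lemma logBar_pos (K : ℕ) : 0 < logBar K := by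
  have : 0 ≤ ∑ i ∈ Icc 2 K, (1 : ℝ) / i := sum_nonneg fun i _ => by positivity
  unfold logBar
  linarith

lemma logBar_eq_one_add_sum_Icc_three {K : ℕ} (hK : 2 ≤ K) :
    logBar K = 1 + ∑ i ∈ Icc 3 K, (1 : ℝ) / i := by
  rw [logBar, ← insert_Icc_add_one_left_eq_Icc hK, sum_insert (by simp)]
  norm_num
  ring

lemma Finset.sum_Icc_reflect {M : Type*} [AddCommMonoid M] (f : ℕ → M) {a b n : ℕ}
    (ha : a ≤ n) (hb : b ≤ n) :
    ∑ k ∈ Icc a b, f (n - k) = ∑ i ∈ Icc (n - b) (n - a), f i := by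
  refine sum_nbij' (n - ·) (n - ·) ?_ ?_ ?_ ?_ fun _ _ => rfl <;>
    intro k hk <;> simp only [mem_Icc] at hk ⊢ <;> omega

lemma sum_inv_reflect_add_one_eq_logBar {K : ℕ} (hK : 2 ≤ K) :
    ∑ k ∈ Icc 1 (K - 2), 1 / ((K : ℝ) + 1 - k) + 1 = logBar K := by
  have hcast : ∀ k ∈ Icc 1 (K - 2), 1 / ((K : ℝ) + 1 - k) = 1 / ((K + 1 - k : ℕ) : ℝ) := by
    intro k hk
    rw [Nat.cast_sub (by simp only [mem_Icc] at hk; omega)]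
    push_cast
    rfl
  rw [sum_congr rfl hcast, sum_Icc_reflect (fun i => 1 / (i : ℝ)) (by omega) (by omega),
    show K + 1 - (K - 2) = 3 by omega, show K + 1 - 1 = K by omega,
    logBar_eq_one_add_sum_Icc_three hK, add_comm]

lemma srPulls_le {K T k : ℕ} (hT : K ≤ T) (hk : k ≤ K + 1) :
    (srPulls K T k : ℝ) ≤ ((T : ℝ) - K) / logBar K / ((K : ℝ) + 1 - k) + 1 := by
  have hTK : (0 : ℝ) ≤ T - K := sub_nonneg.mpr (by exact_mod_cast hT)
  have hden : (0 : ℝ) ≤ K + 1 - k := sub_nonneg.mpr (by exact_mod_cast hk)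
  rw [div_div]
  exact (Nat.ceil_lt_add_one (div_nonneg hTK (mul_nonneg (logBar_pos K).le hden))).le

/-- Budget feasibility of the Successive Rejects phase lengths:
`n₁ + n₂ + ⋯ + n_{K−2} + 2·n_{K−1} ≤ T`. -/
theorem sr_budget_feasible (K T : ℕ) (hK : 2 ≤ K) (hT : K ≤ T) :
    (∑ k ∈ Finset.Icc 1 (K - 2), srPulls K T k) + 2 * srPulls K T (K - 1) ≤ T := by
  set c := ((T : ℝ) - K) / logBar K
  have hbody : (∑ k ∈ Icc 1 (K - 2), srPulls K T k : ℝ)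
      ≤ c * ∑ k ∈ Icc 1 (K - 2), 1 / ((K : ℝ) + 1 - k) + (K - 2 : ℕ) := by
    calc (∑ k ∈ Icc 1 (K - 2), srPulls K T k : ℝ)
        ≤ ∑ k ∈ Icc 1 (K - 2), (c / ((K : ℝ) + 1 - k) + 1) :=
          sum_le_sum fun k hk => srPulls_le hT (by simp only [mem_Icc] at hk; omega)
      _ = _ := by simp [sum_add_distrib, mul_sum, div_eq_mul_inv]
  have hlast : (srPulls K T (K - 1) : ℝ) ≤ c / 2 + 1 := by
    have := srPulls_le hT (show K - 1 ≤ K + 1 by omega)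
    rwa [Nat.cast_sub (by omega), Nat.cast_one, show (K : ℝ) + 1 - (K - 1) = 2 by ring] at this
  have hrelaxed : c * logBar K = T - K := div_mul_cancel₀ _ (logBar_pos K).ne'
  rw [← sum_inv_reflect_add_one_eq_logBar hK] at hrelaxed
  have hK2 : ((K - 2 : ℕ) : ℝ) = K - 2 := by rw [Nat.cast_sub hK]; norm_num
  have htotal : (((∑ k ∈ Icc 1 (K - 2), srPulls K T k) + 2 * srPulls K T (K - 1) : ℕ) : ℝ)
      ≤ T := by
    push_cast
    linarith
  exact_mod_cast htotal
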